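/- arXiv:cs/0203029 — 2 statements merged into one kernel-verified Lean document; each statement's English description precedes it below -/
import Mathlib

section
/- Bit-pattern decoding: define b : ℕ → Bool for n ≥ 1 by writing n = 2^k·(2l+1) and setting b(n) = (l mod 2). Then for every a ≥ 2 and every m, the sequence of values b(m), b(m+1), …, b(m + 2^a − 1) determines m mod 2^{a−2}; that is, if two starting points m, m' yield the same length-2^a pattern of b-values, then m ≡ m' (mod 2^{a−2}). -/
/-!
`oddPartBit` is the (complemented) regular paperfolding sequence: `b (2n) = b n`, and on odd
arguments `b` is `n ↦ [n ≡ 3 mod 4]`, so `b n ≠ b (n + 2)` for odd `n`. Hence no four consecutive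
values alternate, which forces two windows of length `8` with equal values to start at points of
equal parity. Then the even numbers in windows of length `2^(s+3)` starting at `m` and `m'` halve
to windows of length `2^(s+2)` starting at `⌈m/2⌉` and `⌈m'/2⌉`, and induction on `s` applies.
-/

/-- `b(2^k(2l+1)) = l mod 2`: the bit extracted from the odd part of `n`. -/
def oddPartBit (n : ℕ) : Bool :=
  ((n / 2 ^ (padicValNat 2 n)) / 2) % 2 = 1

theorem oddPartBit_two_mul (n : ℕ) : oddPartBit (2 * n) = oddPartBit n := by
  rcases Nat.eq_zero_or_pos n with rfl | hn
  · rfl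
  have hv : padicValNat 2 (2 * n) = padicValNat 2 n + 1 := by
    rw [padicValNat.mul two_ne_zero hn.ne', padicValNat.self one_lt_two, add_comm]
  unfold oddPartBit
  rw [hv, pow_succ', Nat.mul_div_mul_left _ _ two_pos]

theorem oddPartBit_of_odd {n : ℕ} (hn : n % 2 = 1) : oddPartBit n = decide (n / 2 % 2 = 1) := by
  unfold oddPartBit
  rw [padicValNat.eq_zero_of_not_dvd (by omega), pow_zero, Nat.div_one]

theorem oddPartBit_add_two_ne_of_odd {n : ℕ} (hn : n % 2 = 1) :
    oddPartBit (n + 2) ≠ oddPartBit n := by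
  rw [oddPartBit_of_odd hn, oddPartBit_of_odd (by omega)]
  simp only [ne_eq, decide_eq_decide]
  omega

theorem not_oddPartBit_alternating (k : ℕ) :
    ¬ (oddPartBit k ≠ oddPartBit (k + 1) ∧ oddPartBit (k + 1) ≠ oddPartBit (k + 2) ∧
      oddPartBit (k + 2) ≠ oddPartBit (k + 3)) := by
  rintro ⟨h₀, h₁, h₂⟩
  have ne_ne {x y z : Bool} (hxy : x ≠ y) (hyz : y ≠ z) : z = x := by
    cases x <;> cases y <;> cases z <;> simp_all
  rcases Nat.mod_two_eq_zero_or_one k with hk | hk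
  · exact oddPartBit_add_two_ne_of_odd (n := k + 1) (by omega) (ne_ne h₁ h₂)
  · exact oddPartBit_add_two_ne_of_odd hk (ne_ne h₀ h₁)

theorem mod_two_eq_of_oddPartBit_window {m m' : ℕ}
    (h : ∀ j < 8, oddPartBit (m + j) = oddPartBit (m' + j)) : m % 2 = m' % 2 := by
  suffices odd_of_odd : ∀ {m m' : ℕ}, (∀ j < 8, oddPartBit (m + j) = oddPartBit (m' + j)) →
      m % 2 = 1 → m' % 2 = 1 by
    rcases Nat.mod_two_eq_zero_or_one m with hm | hm
    · rcases Nat.mod_two_eq_zero_or_one m' with hm' | hm'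
      · rw [hm, hm']
      · rw [odd_of_odd (fun j hj ↦ (h j hj).symm) hm', hm']
    · rw [hm, odd_of_odd h hm]
  intro m m' h hm
  by_contra hm'
  obtain ⟨k, rfl⟩ : ∃ k, m' = 2 * k := ⟨m' / 2, by omega⟩
  -- the odd points `m, m + 2, m + 4, m + 6` force `b` to alternate on `k, …, k + 3`
  have step (i : ℕ) (hi : i ≤ 2) : oddPartBit (k + i) ≠ oddPartBit (k + i + 1) := by
    rw [← oddPartBit_two_mul, ← oddPartBit_two_mul (k + i + 1),
      show 2 * (k + i) = 2 * k + 2 * i by ring, show 2 * (k + i + 1) = 2 * k + (2 * i + 2) by ring,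
      ← h _ (by omega), ← h _ (by omega), ← add_assoc]
    exact (oddPartBit_add_two_ne_of_odd (by omega)).symm
  exact not_oddPartBit_alternating k ⟨step 0 (by omega), step 1 (by omega), step 2 le_rfl⟩

theorem oddPartBit_window_half {N m m' : ℕ}
    (h : ∀ j < 2 * N, oddPartBit (m + j) = oddPartBit (m' + j)) (hpar : m % 2 = m' % 2) :
    ∀ i < N, oddPartBit ((m + 1) / 2 + i) = oddPartBit ((m' + 1) / 2 + i) := by
  intro i hi
  have hm : 2 * ((m + 1) / 2 + i) = m + (m % 2 + 2 * i) := by omega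
  have hm' : 2 * ((m' + 1) / 2 + i) = m' + (m % 2 + 2 * i) := by omega
  rw [← oddPartBit_two_mul, hm, h _ (by omega), ← hm', oddPartBit_two_mul]

theorem modEq_of_oddPartBit_window (s : ℕ) {m m' : ℕ}
    (h : ∀ j < 2 ^ (s + 2), oddPartBit (m + j) = oddPartBit (m' + j)) :
    m ≡ m' [MOD 2 ^ s] := by
  induction s generalizing m m' with
  | zero => exact Nat.modEq_one
  | succ s ih =>
    have hpar : m % 2 = m' % 2 :=
      mod_two_eq_of_oddPartBit_window fun j hj ↦ h j (by
        calc j < 2 ^ 3 := hj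
          _ ≤ 2 ^ (s + 1 + 2) := Nat.pow_le_pow_right two_pos (by omega))
    have hhalf := ih (oddPartBit_window_half (N := 2 ^ (s + 2)) (by rwa [← pow_succ']) hpar)
    have hdouble := hhalf.mul_left' 2
    rw [← pow_succ', show 2 * ((m + 1) / 2) = m + m % 2 by omega,
      show 2 * ((m' + 1) / 2) = m' + m % 2 by omega] at hdouble
    exact hdouble.add_right_cancel' _

theorem window_determines_residue_general (a : ℕ) (m m' : ℕ)
    (h : ∀ j < 2 ^ a, oddPartBit (m + j) = oddPartBit (m' + j)) :
    m ≡ m' [MOD 2 ^ (a - 2)] := by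
  rcases Nat.lt_or_ge a 2 with ha | ha
  · rw [Nat.sub_eq_zero_of_le ha.le, pow_zero]
    exact Nat.modEq_one
  · obtain ⟨s, rfl⟩ := Nat.exists_eq_add_of_le' ha
    simpa using modEq_of_oddPartBit_window s h

/-- Bit-pattern decoding: a window of `2^a` consecutive values of `b` determines the
starting point modulo `2^(a-2)`. -/
theorem window_determines_residue (a : ℕ) (ha : 2 ≤ a) (m m' : ℕ) (hm : 1 ≤ m) (hm' : 1 ≤ m')
    (h : ∀ j < 2 ^ a, oddPartBit (m + j) = oddPartBit (m' + j)) :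
    m ≡ m' [MOD 2 ^ (a - 2)] :=
  window_determines_residue_general a m m' h
end

section
/- In the diagonal construction of the partial predicate P on {0,1}^n, the number of inputs on which P is defined is less than 2^n, i.e., P diverges on some nonempty final segment [x_n, 1^n]: since each new defined value decreases the remaining universal measure of consistent total extensions by more than 2^{-n}, and the total initial mass is at most 1, at most 2^n − 1 values can be assigned. -/
/-!
Each of the first `D` steps lowers the remaining mass by more than `ε = 2⁻ⁿ`, so after `D ≥ 1`
steps a total of `D • ε` has been spent strictly inside the initial mass `M 0 ≤ 1`; hence
`D < 2ⁿ`.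
-/

theorem add_nsmul_lt_of_forall_add_lt {α : Type*} [AddCommMonoid α] [PartialOrder α]
    [IsOrderedCancelAddMonoid α] {M : ℕ → α} {ε : α} {k : ℕ}
    (hdec : ∀ x < k, M (x + 1) + ε < M x) (hk : 0 < k) :
    M k + k • ε < M 0 := by
  induction k, hk using Nat.le_induction with
  | base => simpa using hdec 0 one_pos
  | succ k hk ih =>
    calc M (k + 1) + (k + 1) • ε = (M (k + 1) + ε) + k • ε := by rw [succ_nsmul']; abel
      _ < M k + k • ε := add_lt_add_left (hdec k k.lt_succ_self) _
      _ < M 0 := ih fun x hx => hdec x (hx.trans k.lt_succ_self)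

theorem lt_two_pow_of_nsmul_inv_two_pow_lt_one {D n : ℕ}
    (h : D • (2 : NNReal)⁻¹ ^ n < 1) : D < 2 ^ n := by
  rw [nsmul_eq_mul, inv_pow, mul_inv_lt_iff₀ (by positivity), one_mul] at h
  exact_mod_cast h

/-- In the diagonal construction of the partial predicate `P` on `{0,1}ⁿ`: if the remaining
universal measure `M x` of consistent total extensions starts at most `1` and each of the
first `D` defined values decreases it by more than `2⁻ⁿ`, then at most `2ⁿ - 1` values can
be assigned, i.e. `P` diverges on a nonempty final segment. -/
theorem diagonal_defined_count_lt (n : ℕ) (M : ℕ → NNReal) (hM0 : M 0 ≤ 1) (D : ℕ)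
    (hdec : ∀ x < D, M (x + 1) + (2 : NNReal)⁻¹ ^ n < M x) :
    D ≤ 2 ^ n - 1 := by
  rcases D.eq_zero_or_pos with rfl | hD
  · exact Nat.zero_le _
  have hspent : D • (2 : NNReal)⁻¹ ^ n < 1 :=
    (le_add_self.trans_lt (add_nsmul_lt_of_forall_add_lt hdec hD)).trans_le hM0
  have := lt_two_pow_of_nsmul_inv_two_pow_lt_one hspent
  omega
end
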